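/- For every δ₁ > 0 there is a constant c > 0, depending only on δ₁, such that for all s ≥ δ₁ and all h ∈ (0,1): ∫_ℝ ( (s−x)₊^{h−1/2} log((s−x)₊) − (−x)₊^{h−1/2} log((−x)₊) )² dx ≥ c. In fact one may take c = ∫_0^{min(δ₁,1)} v log²(v) dv > 0. -/

import Mathlib

open MeasureTheory Set

noncomputable section

/-- `y₊^{h−1/2} log(y₊)`: equals `y^{h−1/2} log y` if `y > 0` and `0` otherwise. -/
def logKernel (h y : ℝ) : ℝ := if 0 < y then y ^ (h - 1/2) * Real.log y else 0



lemma rpow_log_sq_le {h : ℝ} (hh : 0 < h) {y : ℝ} (hy : 0 < y) (hy1 : y ≤ 1) :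
    y ^ h * Real.log y ^ 2 ≤ (2 / h) ^ 2 := by
  have h2 : y ^ h * Real.log y ^ 2 = (y ^ (h/2) * Real.log y) ^ 2 := by
    rw [mul_pow, ← Real.rpow_natCast (y ^ (h/2)) 2, ← Real.rpow_mul hy.le]
    norm_num
  rw [h2]
  have hu : 0 < y ^ (h/2) := Real.rpow_pos_of_pos hy _
  have hu1 : y ^ (h/2) ≤ 1 := Real.rpow_le_one hy.le hy1 (by positivity)
  have hlog : Real.log (y ^ (h/2)) = (h/2) * Real.log y := Real.log_rpow hy _
  have habs : |Real.log (y ^ (h/2)) * y ^ (h/2)| < 1 := Real.abs_log_mul_self_lt _ hu hu1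
  have : |y ^ (h/2) * Real.log y| ≤ 2 / h := by
    have := habs.le
    rw [hlog] at this
    have h3 : |(h/2) * Real.log y * y ^ (h/2)| = (h/2) * |y ^ (h/2) * Real.log y| := by
      rw [abs_mul, abs_mul, abs_of_nonneg (by positivity : (0:ℝ) ≤ h/2),
        abs_mul, abs_of_nonneg hu.le]; ring
    rw [h3] at this
    have hh2 : 0 < h / 2 := by positivity
    calc |y ^ (h/2) * Real.log y| = ((h/2) * |y ^ (h/2) * Real.log y|) / (h/2) := by
          field_simp
      _ ≤ 1 / (h/2) := by gcongr
      _ = 2 / h := by field_simp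
  calc (y ^ (h/2) * Real.log y) ^ 2 = |y ^ (h/2) * Real.log y| ^ 2 := (sq_abs _).symm
    _ ≤ (2/h) ^ 2 := by
        apply pow_le_pow_left₀ (abs_nonneg _) this

lemma measurable_logKernel (h : ℝ) : Measurable (logKernel h) := by
  unfold logKernel
  exact Measurable.ite (measurableSet_lt measurable_const measurable_id)
    ((by fun_prop : Measurable fun y:ℝ => y ^ (h-1/2)).mul Real.measurable_log) measurable_const



lemma logKernel_sq_eq {h y : ℝ} (hy : 0 < y) :
    (logKernel h y) ^ 2 = y ^ (2*h - 1) * Real.log y ^ 2 := by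
  rw [logKernel, if_pos hy, mul_pow, ← Real.rpow_natCast (y ^ (h - 1/2)) 2,
    ← Real.rpow_mul hy.le, show ((h:ℝ) - 1/2) * ((2:ℕ):ℝ) = 2*h - 1 by push_cast; ring]

lemma integrableOn_logKernel_sq_Iic {h : ℝ} (hh : h ∈ Ioo (0:ℝ) 1) (B : ℝ) :
    IntegrableOn (fun y => (logKernel h y) ^ 2) (Iic B) := by
  obtain ⟨hh0, hh1⟩ := hh
  set q : ℝ → ℝ := fun y => (logKernel h y) ^ 2 with hq
  have hqm : Measurable q := (measurable_logKernel h).pow_const 2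
  set C := max B 1 with hC
  have h1 : IntegrableOn q (Iic 0) := by
    refine (integrableOn_zero (ε' := ℝ)).congr_fun (fun y hy => ?_) measurableSet_Iic
    simp only [q, logKernel, if_neg (not_lt.mpr (mem_Iic.mp hy)), ne_eq]
    norm_num
  have h2 : IntegrableOn q (Ioc 0 1) := by
    have hg : IntegrableOn (fun y : ℝ => (2/h)^2 * y ^ (h - 1)) (Ioc (0:ℝ) 1) := by
      have := (intervalIntegral.intervalIntegrable_rpow' (a := 0) (b := 1) (by linarith : (-1:ℝ) < h - 1))
      exact ((intervalIntegrable_iff_integrableOn_Ioc_of_le (by norm_num)).mp this).const_mul _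
    refine hg.integrable.mono' hqm.aestronglyMeasurable.restrict ?_
    rw [ae_restrict_iff' measurableSet_Ioc]
    filter_upwards with y hy
    obtain ⟨hy0, hy1⟩ := hy
    simp only [q, Real.norm_eq_abs]
    rw [abs_of_nonneg (sq_nonneg (logKernel h y)), logKernel_sq_eq hy0]
    have : (2*h - 1 : ℝ) = (h - 1) + h := by ring
    rw [this, Real.rpow_add hy0, mul_assoc]
    rw [mul_comm ((2/h)^2)]
    exact mul_le_mul_of_nonneg_left (rpow_log_sq_le hh0 hy0 hy1)
      (Real.rpow_nonneg hy0.le _)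
  have h3 : IntegrableOn q (Ioc 1 C) := by
    have hcont : ContinuousOn q (Icc 1 C) := by
      have : ContinuousOn (fun y : ℝ => (y ^ (h - 1/2) * Real.log y)^2) (Icc 1 C) := by
        refine ContinuousOn.pow ?_ 2
        refine ContinuousOn.mul ?_ (Real.continuousOn_log.mono ?_)
        · exact continuousOn_id.rpow_const fun y hy =>
            Or.inl (ne_of_gt (lt_of_lt_of_le one_pos hy.1))
        · intro y hy; simp only [mem_compl_iff, mem_singleton_iff]
          have := hy.1; intro h0; rw [h0] at this; linarith
      refine this.congr fun y hy => ?_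
      simp only [q, logKernel, if_pos (by linarith [hy.1] : (0:ℝ) < y)]
    exact (hcont.integrableOn_Icc).mono_set Ioc_subset_Icc_self
  have : IntegrableOn q (Iic 0 ∪ (Ioc 0 1 ∪ Ioc 1 C)) :=
    h1.union (h2.union h3)
  refine this.mono_set fun y hy => ?_
  rcases le_or_gt y 0 with h' | h'
  · exact Or.inl h'
  · rcases le_or_gt y 1 with h'' | h''
    · exact Or.inr (Or.inl ⟨h', h''⟩)
    · exact Or.inr (Or.inr ⟨h'', le_max_of_le_left (mem_Iic.mp hy)⟩)

lemma intervalIntegrable_logKernel_sq {h : ℝ} (hh : h ∈ Ioo (0:ℝ) 1) (a b : ℝ) :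
    IntervalIntegrable (fun y => (logKernel h y) ^ 2) volume a b := by
  rw [intervalIntegrable_iff]
  exact (integrableOn_logKernel_sq_Iic hh (max a b)).mono_set
    fun y hy => le_max_iff.mpr (Or.elim (le_total a b)
      (fun hab => by rw [uIoc_of_le hab] at hy; exact Or.inr hy.2)
      (fun hab => by rw [uIoc_of_ge hab] at hy; exact Or.inl hy.2))


lemma tail_diff_le {h s : ℝ} (hh0 : 0 < h) (hh1 : h < 1) (hs : 0 ≤ s) {a : ℝ} (ha : 1 ≤ a) :
    (logKernel h (a + s) - logKernel h a) ^ 2 ≤ ((2/(1-h) + 1) * s) ^ 2 * a ^ (h - 2) := by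
  set p := h - 1/2 with hp
  set ε := (1 - h) / 2 with hε
  have hε0 : 0 < ε := by rw [hε]; linarith
  set K := 1/ε + 1 with hK
  have hK0 : 0 < K := by positivity
  have ha0 : (0:ℝ) < a := lt_of_lt_of_le one_pos ha
  set g : ℝ → ℝ := fun y => y ^ p * Real.log y with hg
  set g' : ℝ → ℝ := fun y => p * y ^ (p - 1) * Real.log y + y ^ p * y⁻¹ with hg'
  set M := K * a ^ (h/2 - 1) with hM
  have hM0 : 0 ≤ M := by positivity
  -- derivative
  have hderiv : ∀ y ∈ Icc a (a + s), HasDerivWithinAt g (g' y) (Icc a (a + s)) y := by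
    intro y hy
    have hy0 : (0:ℝ) < y := lt_of_lt_of_le ha0 hy.1
    exact (((Real.hasDerivAt_rpow_const (Or.inl hy0.ne')).mul
      (Real.hasDerivAt_log hy0.ne'))).hasDerivWithinAt
  -- bound on derivative
  have hbound : ∀ y ∈ Icc a (a + s), ‖g' y‖ ≤ M := by
    intro y hy
    have hay : a ≤ y := hy.1
    have hy1 : (1:ℝ) ≤ y := le_trans ha hay
    have hy0 : (0:ℝ) < y := lt_of_lt_of_le one_pos hy1
    have hlog0 : 0 ≤ Real.log y := Real.log_nonneg hy1
    have e1 : y ^ p * y⁻¹ = y ^ (p - 1) := by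
      rw [← Real.rpow_neg_one y, ← Real.rpow_add hy0]; ring_nf
    have e2 : g' y = y ^ (p - 1) * (p * Real.log y + 1) := by
      simp only [hg']; rw [e1]; ring
    have hrp : (0:ℝ) < y ^ (p - 1) := Real.rpow_pos_of_pos hy0 _
    have hlogle : Real.log y ≤ y ^ ε / ε := by
      have := Real.log_le_sub_one_of_pos (Real.rpow_pos_of_pos hy0 ε)
      rw [Real.log_rpow hy0] at this
      have h2 : ε * Real.log y ≤ y ^ ε := by linarith [Real.rpow_pos_of_pos hy0 ε]
      calc Real.log y = (ε * Real.log y) / ε := by field_simp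
        _ ≤ y ^ ε / ε := by gcongr
    have hone : (1:ℝ) ≤ y ^ ε := Real.one_le_rpow hy1 hε0.le
    have habs : |p * Real.log y + 1| ≤ y ^ ε * K := by
      have h1 : |p * Real.log y + 1| ≤ |p| * Real.log y + 1 := by
        calc |p * Real.log y + 1| ≤ |p * Real.log y| + |1| := abs_add_le _ _
          _ = |p| * Real.log y + 1 := by rw [abs_mul, abs_of_nonneg hlog0, abs_one]
      have h2 : |p| ≤ 1 := by rw [hp, abs_le]; constructor <;> linarith
      have h3 : |p| * Real.log y ≤ Real.log y := by
        nlinarith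
      calc |p * Real.log y + 1| ≤ Real.log y + 1 := by linarith
        _ ≤ y ^ ε / ε + y ^ ε := by linarith
        _ = y ^ ε * K := by rw [hK]; field_simp
    have key : ‖g' y‖ ≤ y ^ (p - 1) * (y ^ ε * K) := by
      rw [e2, Real.norm_eq_abs, abs_mul, abs_of_nonneg hrp.le]
      exact mul_le_mul_of_nonneg_left habs hrp.le
    have e3 : y ^ (p - 1) * y ^ ε = y ^ (h/2 - 1) := by
      rw [← Real.rpow_add hy0]; congr 1; rw [hp, hε]; ring
    have e4 : y ^ (p - 1) * (y ^ ε * K) = y ^ (h/2 - 1) * K := by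
      rw [← mul_assoc, e3]
    have e5 : y ^ (h/2 - 1) ≤ a ^ (h/2 - 1) :=
      Real.rpow_le_rpow_of_nonpos ha0 hay (by linarith)
    calc ‖g' y‖ ≤ y ^ (h/2 - 1) * K := by rw [← e4]; exact key
      _ ≤ a ^ (h/2 - 1) * K := mul_le_mul_of_nonneg_right e5 hK0.le
      _ = M := by rw [hM]; ring
  have hmem1 : a ∈ Icc a (a + s) := ⟨le_rfl, by linarith⟩
  have hmem2 : a + s ∈ Icc a (a + s) := ⟨by linarith, le_rfl⟩
  have hmvt := Convex.norm_image_sub_le_of_norm_hasDerivWithin_le hderiv hbound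
    (convex_Icc a (a + s)) hmem1 hmem2
  have has0 : (0:ℝ) < a + s := by linarith
  have hlk1 : logKernel h (a + s) = g (a + s) := by rw [logKernel, if_pos has0]
  have hlk2 : logKernel h a = g a := by rw [logKernel, if_pos ha0]
  rw [hlk1, hlk2]
  have hnorm : ‖g (a+s) - g a‖ ≤ M * s := by
    have : ‖a + s - a‖ = s := by rw [show a + s - a = s by ring, Real.norm_eq_abs, abs_of_nonneg hs]
    rwa [this] at hmvt
  have hsq : (g (a+s) - g a)^2 ≤ (M * s)^2 := by
    rw [← sq_abs]
    exact pow_le_pow_left₀ (abs_nonneg _) hnorm 2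
  refine hsq.trans_eq ?_
  have e6 : (a ^ (h/2 - 1 : ℝ))^2 = a ^ (h - 2 : ℝ) := by
    rw [← Real.rpow_natCast (a ^ (h/2 - 1 : ℝ)) 2, ← Real.rpow_mul ha0.le]
    congr 1; push_cast; ring
  have hKK : K = 2/(1-h) + 1 := by rw [hK, hε]; congr 1; field_simp
  rw [hM, mul_pow, mul_pow, e6, hKK]
  ring



lemma measurable_f (h s : ℝ) :
    Measurable (fun x => (logKernel h (s - x) - logKernel h (-x)) ^ 2) :=
  (((measurable_logKernel h).comp (measurable_const.sub measurable_id)).sub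
    ((measurable_logKernel h).comp measurable_neg)).pow_const 2

lemma integrable_f {h s : ℝ} (hh : h ∈ Ioo (0:ℝ) 1) (hs : 0 < s) :
    Integrable (fun x => (logKernel h (s - x) - logKernel h (-x)) ^ 2) := by
  obtain ⟨hh0, hh1⟩ := hh
  set f : ℝ → ℝ := fun x => (logKernel h (s - x) - logKernel h (-x)) ^ 2 with hf
  have hfm : Measurable f := measurable_f h s
  -- tail part
  have T1 : IntegrableOn f (Iic (-1)) := by
    have base : IntegrableOn (fun y : ℝ => y ^ (h - 2)) (Ici 1) :=
      Iff.mpr integrableOn_Ici_iff_integrableOn_Ioi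
        (integrableOn_Ioi_rpow_of_lt (by linarith) one_pos)
    have hGneg : IntegrableOn (fun x : ℝ => (-x) ^ (h - 2)) (Iic (-1)) := by
      have := (MeasurePreserving.integrableOn_comp_preimage
        (Measure.measurePreserving_neg (volume : Measure ℝ))
        (Homeomorph.neg ℝ).measurableEmbedding
        (f := fun y : ℝ => y ^ (h - 2)) (s := Ici (1:ℝ))).mpr base
      simpa [Function.comp_def, neg_preimage, neg_Ici] using this
    have hG : IntegrableOn (fun x : ℝ => ((2/(1-h) + 1) * s)^2 * (-x) ^ (h - 2)) (Iic (-1)) :=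
      hGneg.const_mul _
    refine hG.integrable.mono' hfm.aestronglyMeasurable.restrict ?_
    rw [ae_restrict_iff' measurableSet_Iic]
    filter_upwards with x hx
    have hx1 : (1:ℝ) ≤ -x := by simpa using neg_le_neg (mem_Iic.mp hx)
    have key := tail_diff_le hh0 hh1 hs.le hx1
    rw [Real.norm_eq_abs, abs_of_nonneg (sq_nonneg _)]
    simpa [hf, show -x + s = s - x by ring] using key
  -- middle part
  have T2 : IntegrableOn f (Ioc (-1) s) := by
    have hs1 : (-1:ℝ) ≤ s := by linarith
    have int1 : IntervalIntegrable (fun x => (logKernel h (s - x))^2) volume (-1) s := by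
      have := (intervalIntegrable_logKernel_sq ⟨hh0, hh1⟩ (s+1) 0).comp_sub_left s
      have e1 : s - (s+1) = (-1:ℝ) := by ring
      have e2 : s - 0 = s := by ring
      rwa [e1, e2] at this
    have int2 : IntervalIntegrable (fun x => (logKernel h (-x))^2) volume (-1) s := by
      have := (intervalIntegrable_logKernel_sq ⟨hh0, hh1⟩ 1 (-s)).comp_sub_left 0
      have e1 : (0:ℝ) - 1 = -1 := by ring
      have e2 : (0:ℝ) - -s = s := by ring
      rw [e1, e2] at this
      simpa [zero_sub] using this
    have intG : IntervalIntegrable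
        (fun x => 2*(logKernel h (s - x))^2 + 2*(logKernel h (-x))^2) volume (-1) s :=
      (int1.const_mul 2).add (int2.const_mul 2)
    have : IntervalIntegrable f volume (-1) s := by
      refine intG.mono_fun' hfm.aestronglyMeasurable.restrict ?_
      filter_upwards with x
      rw [Real.norm_eq_abs, abs_of_nonneg (sq_nonneg _)]
      simp only [hf]
      nlinarith [sq_nonneg (logKernel h (s - x) + logKernel h (-x))]
    exact (intervalIntegrable_iff_integrableOn_Ioc_of_le hs1).mp this
  -- upper part
  have T3 : IntegrableOn f (Ioi s) := by
    refine (integrableOn_zero (ε' := ℝ)).congr_fun (fun x hx => ?_) measurableSet_Ioi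
    have hx' : s < x := mem_Ioi.mp hx
    have h1 : logKernel h (s - x) = 0 := by rw [logKernel, if_neg (by linarith)]
    have h2 : logKernel h (-x) = 0 := by
      rw [logKernel, if_neg (by intro hc; linarith [neg_pos.mp hc])]
    simp [hf, h1, h2]
  rw [← integrableOn_univ]
  refine (T1.union (T2.union T3)).mono_set fun x _ => ?_
  rcases le_or_gt x (-1) with h' | h'
  · exact Or.inl h'
  · rcases le_or_gt x s with h'' | h''
    · exact Or.inr (Or.inl ⟨h', h''⟩)
    · exact Or.inr (Or.inr h'')

/-- For every `δ₁ > 0`, the constant `c = ∫_0^{min(δ₁,1)} v log²(v) dv > 0` bounds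
from below the variance integral
`∫_ℝ ((s−x)₊^{h−1/2} log(s−x)₊ − (−x)₊^{h−1/2} log(−x)₊)² dx`
for all `s ≥ δ₁` and all `h ∈ (0,1)`. -/
theorem variance_integral_lower_bound (δ₁ : ℝ) (hδ : 0 < δ₁) :
    (0 < ∫ v in (0:ℝ)..(min δ₁ 1), v * Real.log v ^ 2) ∧
    ∀ s : ℝ, δ₁ ≤ s → ∀ h ∈ Set.Ioo (0:ℝ) 1,
      (∫ v in (0:ℝ)..(min δ₁ 1), v * Real.log v ^ 2)
        ≤ ∫ x : ℝ, (logKernel h (s - x) - logKernel h (-x)) ^ 2 := by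
  set m := min δ₁ 1 with hm
  have hm0 : 0 < m := lt_min hδ one_pos
  have hm1 : m ≤ 1 := min_le_right _ _
  have hmδ : m ≤ δ₁ := min_le_left _ _
  set F : ℝ → ℝ := fun v => v * Real.log v ^ 2 with hF
  have hFm : Measurable F := measurable_id.mul (Real.measurable_log.pow_const 2)
  have hFint : IntervalIntegrable F volume 0 m := by
    refine (intervalIntegrable_const (c := (4:ℝ))).mono_fun' hFm.aestronglyMeasurable.restrict ?_
    rw [uIoc_of_le hm0.le, Filter.EventuallyLE, ae_restrict_iff' measurableSet_Ioc]
    filter_upwards with v hv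
    obtain ⟨hv0, hvm⟩ := hv
    have hle := rpow_log_sq_le one_pos hv0 (hvm.trans hm1)
    rw [Real.rpow_one] at hle
    rw [Real.norm_eq_abs, abs_of_nonneg (by positivity : (0:ℝ) ≤ F v)]
    simpa [hF] using hle.trans_eq (by norm_num)
  have hcpos : 0 < ∫ v in (0:ℝ)..m, F v := by
    refine intervalIntegral.intervalIntegral_pos_of_pos_on hFint (fun v hv => ?_) hm0
    have hlog : Real.log v ≠ 0 := ne_of_lt (Real.log_neg hv.1 (lt_of_lt_of_le hv.2 hm1))
    have hv0 := hv.1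
    positivity
  refine ⟨hcpos, fun s hsδ h hh => ?_⟩
  have hs0 : 0 < s := lt_of_lt_of_le hδ hsδ
  set f : ℝ → ℝ := fun x => (logKernel h (s - x) - logKernel h (-x)) ^ 2 with hf
  have hfi : Integrable f := integrable_f hh hs0
  obtain ⟨hh0, hh1⟩ := hh
  -- change of variables
  have step1 : (∫ v in (0:ℝ)..m, F v) = ∫ x in (s-m)..s, F (s - x) := by
    rw [intervalIntegral.integral_comp_sub_left F s]
    rw [show s - s = (0:ℝ) by ring, show s - (s - m) = m by ring]
  -- pointwise comparison on Icc (s-m) s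
  have step2 : (∫ x in (s-m)..s, F (s - x)) ≤ ∫ x in (s-m)..s, f x := by
    have hab : s - m ≤ s := by linarith
    have II1 : IntervalIntegrable (fun x => F (s - x)) volume (s-m) s := by
      have := (hFint.symm.comp_sub_left s)
      rwa [show s - m = s - m by ring, show s - 0 = s by ring] at this
    refine intervalIntegral.integral_mono_on hab II1 hfi.intervalIntegrable ?_
    intro x hx
    obtain ⟨hx1, hx2⟩ := hx
    rcases eq_or_lt_of_le hx2 with hxe | hxlt
    · -- x = s : LHS is 0
      subst hxe
      simp only [hF, sub_self, Real.log_zero, zero_mul]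
      positivity
    · have hy0 : 0 < s - x := by linarith
      have hym : s - x ≤ m := by linarith
      have hy1 : s - x ≤ 1 := hym.trans hm1
      have hxpos : 0 ≤ x := by
        have : δ₁ - m ≤ x := by
          have := sub_le_sub hsδ (le_refl m); linarith
        linarith [sub_nonneg.mpr hmδ]
      have hneg : logKernel h (-x) = 0 := by
        rw [logKernel, if_neg (by simpa using not_lt.mpr (neg_nonpos.mpr hxpos))]
      simp only [hf, hneg, sub_zero]
      rw [logKernel_sq_eq hy0]
      have hpow : (s - x) ^ (1:ℝ) ≤ (s - x) ^ (2*h - 1) :=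
        Real.rpow_le_rpow_of_exponent_ge hy0 hy1 (by linarith)
      rw [Real.rpow_one] at hpow
      exact mul_le_mul_of_nonneg_right hpow (sq_nonneg _)
  -- set integral vs full integral
  have step3 : (∫ x in (s-m)..s, f x) ≤ ∫ x : ℝ, f x := by
    rw [intervalIntegral.integral_of_le (by linarith : s - m ≤ s)]
    exact setIntegral_le_integral hfi (ae_of_all _ fun x => sq_nonneg _)
  calc (∫ v in (0:ℝ)..m, F v) = ∫ x in (s-m)..s, F (s - x) := step1
    _ ≤ ∫ x in (s-m)..s, f x := step2
    _ ≤ ∫ x : ℝ, f x := step3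

end
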